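/- Let G be a finite simple graph, n ≥ 1, and let U assign to every dart d an invertible n×n complex matrix such that U(reversal of d) = (U d)⁻¹. Define the block matrix T, indexed by pairs (dart, index in Fin n), whose (d',d) block equals U d if d' follows d without backtracking and 0 otherwise, and the block matrix Δ(u), indexed by pairs (vertex, index in Fin n), whose (x,y) block equals (1 + u²(deg x − 1))·Iₙ if x = y, equals −u·U((y,x)) if x and y are adjacent, and 0 otherwise. Then for every complex u, (1 − u²)^{n|V|} · det(I − u·T) = (1 − u²)^{n|E|} · det(Δ(u)). -/

import Mathlib

/-!
Let `S` be the tail incidence matrix (darts × vertices, with identity blocks), `J` the matrix whose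
`(d, d.symm)` block is `U d.symm`, and `N = Sᵀ J` the head incidence matrix weighted by `U`. Then
`T = S N - J`, `Δ(u) = (1 - u²) I + u² SᵀS - u SᵀJS` (as `SᵀS` is the degree matrix and `SᵀJS` the
twisted adjacency matrix), and `J² = I` because `U d.symm = (U d)⁻¹`. The block factorization
`[[(1-u²)I, uN], [0, I-uT]] · [[I, 0], [uJS - S, I]] = [[I, 0], [-S, I]] · [[Δ(u), uN], [0, I+uJ]]`
gives `(1 - u²)^{n|V|} det(I - uT) = det(I + uJ) det Δ(u)`, valid for every `u`. Orienting each edge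
puts `I + uJ` in the form `[[I, uB], [uC, I]]` with `CB = I`, so `det(I + uJ) = (1 - u²)^{n|E|}`.
-/

open Matrix

variable {V : Type*}

/-- A dart `d'` follows a dart `d` without backtracking. -/
def FollowsNB {G : SimpleGraph V} (d' d : G.Dart) : Prop :=
  d'.fst = d.snd ∧ d' ≠ d.symm

instance {G : SimpleGraph V} [DecidableEq V] (d' d : G.Dart) : Decidable (FollowsNB d' d) :=
  inferInstanceAs (Decidable (_ ∧ _))

/-- The block edge-transfer matrix `T` twisted by the potential `U`: the `(d', d)` block
equals `U d` if `d'` follows `d` without backtracking, and `0` otherwise. -/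
def Tblock (G : SimpleGraph V) [DecidableEq V] (n : ℕ)
    (U : G.Dart → Matrix (Fin n) (Fin n) ℂ) :
    Matrix (G.Dart × Fin n) (G.Dart × Fin n) ℂ :=
  fun p q => if FollowsNB p.1 q.1 then U q.1 p.2 q.2 else 0

/-- The block deformed Laplacian `Δ(u)`: the `(x, y)` block equals
`(1 + u²(deg x − 1))·Iₙ` if `x = y`, equals `−u·U((y,x))` if `x` and `y` are adjacent,
and `0` otherwise. -/
noncomputable def DeltaBlock (G : SimpleGraph V) [Fintype V] [DecidableEq V]
    [DecidableRel G.Adj] (n : ℕ) (U : G.Dart → Matrix (Fin n) (Fin n) ℂ) (u : ℂ) :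
    Matrix (V × Fin n) (V × Fin n) ℂ :=
  fun p q =>
    if p.1 = q.1 then
      (if p.2 = q.2 then 1 + u ^ 2 * ((G.degree p.1 : ℂ) - 1) else 0)
    else if h : G.Adj p.1 q.1 then
      -u * U ⟨(q.1, p.1), h.symm⟩ p.2 q.2
    else 0

namespace Matrix

theorem bass_det_identity {k m R : Type*} [Fintype k] [DecidableEq k] [Fintype m]
    [DecidableEq m] [CommRing R] (A : Matrix k m R) (B : Matrix m k R) (J : Matrix k k R)
    (hJ : J * J = 1) (u : R) :
    (1 - u ^ 2) ^ Fintype.card m * det (1 - u • (A * (B * J) - J)) =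
      det (1 + u • J) * det ((1 - u ^ 2) • 1 + u ^ 2 • (B * A) - u • (B * J * A)) := by
  have hJA : J * (J * A) = A := by rw [← Matrix.mul_assoc, hJ, Matrix.one_mul]
  have factorization :
      fromBlocks ((1 - u ^ 2) • 1) (u • (B * J)) 0 (1 - u • (A * (B * J) - J)) *
          fromBlocks 1 0 (u • (J * A) - A) 1 =
        fromBlocks 1 0 (-A) 1 *
          fromBlocks ((1 - u ^ 2) • 1 + u ^ 2 • (B * A) - u • (B * J * A)) (u • (B * J)) 0
            (1 + u • J) := by
    simp only [fromBlocks_multiply, Matrix.mul_one, Matrix.one_mul, Matrix.mul_zero,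
      Matrix.zero_mul, add_zero, zero_add, Matrix.mul_sub, Matrix.sub_mul, Matrix.mul_add,
      Matrix.smul_mul, Matrix.mul_smul, Matrix.mul_assoc, hJA, Matrix.neg_mul]
    congr 1 <;> module
  simpa [det_fromBlocks_zero₂₁, det_fromBlocks_zero₁₂, det_smul, mul_comm]
    using congrArg det factorization

end Matrix

namespace SimpleGraph

section Orientation

variable {G : SimpleGraph V} {o : G.Dart → Prop} [DecidablePred o]

def dartEquivSumOfOrientation (ho : ∀ d, o d.symm ↔ ¬ o d) :
    G.Dart ≃ {d // o d} ⊕ {d // o d} :=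
  (Equiv.sumCompl o).symm.trans <| Equiv.sumCongr (Equiv.refl _) <|
    Dart.symm_involutive.toPerm.subtypeEquiv fun d => (ho d).symm

@[simp]
theorem dartEquivSumOfOrientation_symm_inl (ho : ∀ d, o d.symm ↔ ¬ o d) (d : {d // o d}) :
    (dartEquivSumOfOrientation ho).symm (.inl d) = d := rfl

@[simp]
theorem dartEquivSumOfOrientation_symm_inr (ho : ∀ d, o d.symm ↔ ¬ o d) (d : {d // o d}) :
    (dartEquivSumOfOrientation ho).symm (.inr d) = d.1.symm := rfl

theorem card_subtype_orientation [Fintype V] [DecidableRel G.Adj]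
    (ho : ∀ d, o d.symm ↔ ¬ o d) : Fintype.card {d // o d} = G.edgeFinset.card := by
  have := Fintype.card_congr (dartEquivSumOfOrientation ho)
  rw [Fintype.card_sum, dart_card_eq_twice_card_edges] at this
  omega

end Orientation

theorem exists_orientation (G : SimpleGraph V) : ∃ o : G.Dart → Prop, ∀ d, o d.symm ↔ ¬ o d := by
  let _ : LinearOrder V := IsWellOrder.linearOrder WellOrderingRel
  exact ⟨fun d => d.fst < d.snd, fun d => by simpa using (d.adj.ne.symm.le_iff_lt).symm⟩

variable (G : SimpleGraph V) [DecidableEq V]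

def dartTailMatrix (R ι : Type*) [Zero R] [One R] [DecidableEq ι] :
    Matrix (G.Dart × ι) (V × ι) R :=
  Matrix.of fun d x => if d.1.fst = x.1 then (1 : Matrix ι ι R) d.2 x.2 else 0

def dartHeadMatrix {ι R : Type*} [Zero R] (U : G.Dart → Matrix ι ι R) :
    Matrix (V × ι) (G.Dart × ι) R :=
  Matrix.of fun x e => if e.1.snd = x.1 then U e.1 x.2 e.2 else 0

def dartReversalMatrix {ι R : Type*} [Zero R] (U : G.Dart → Matrix ι ι R) :
    Matrix (G.Dart × ι) (G.Dart × ι) R :=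
  Matrix.of fun d e => if e.1 = d.1.symm then U e.1 d.2 e.2 else 0

variable {ι R : Type*} [Fintype ι] [DecidableEq ι] [CommRing R] [Fintype V]

theorem dartTailMatrix_mul_dartHeadMatrix (U : G.Dart → Matrix ι ι R) :
    G.dartTailMatrix R ι * G.dartHeadMatrix U =
      Matrix.of fun d e => if d.1.fst = e.1.snd then U e.1 d.2 e.2 else 0 := by
  ext ⟨d, i⟩ ⟨e, j⟩
  rw [Matrix.mul_apply, Fintype.sum_prod_type, Finset.sum_eq_single d.fst]
  · by_cases h : d.fst = e.snd
    · simp [dartTailMatrix, dartHeadMatrix, Matrix.one_apply, h]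
    · simp [dartTailMatrix, dartHeadMatrix, Matrix.one_apply, h, Ne.symm h]
  · intro x _ hx
    simp [dartTailMatrix, Ne.symm hx]
  · simp

variable [DecidableRel G.Adj]

theorem transpose_dartTailMatrix_mul_dartReversalMatrix (U : G.Dart → Matrix ι ι R) :
    (G.dartTailMatrix R ι)ᵀ * G.dartReversalMatrix U = G.dartHeadMatrix U := by
  ext ⟨x, i⟩ ⟨e, j⟩
  rw [Matrix.mul_apply, Fintype.sum_prod_type, Finset.sum_eq_single e.symm]
  · by_cases h : e.snd = x <;>
      simp [dartTailMatrix, dartReversalMatrix, dartHeadMatrix, Matrix.one_apply, h]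
  · intro d _ hd
    have : e ≠ d.symm := fun h => hd (by rw [h, Dart.symm_symm])
    simp [dartReversalMatrix, this]
  · simp

theorem dartHeadMatrix_mul_dartTailMatrix (U : G.Dart → Matrix ι ι R) :
    G.dartHeadMatrix U * G.dartTailMatrix R ι =
      Matrix.of fun x y => if h : G.Adj x.1 y.1 then U ⟨(y.1, x.1), h.symm⟩ x.2 y.2 else 0 := by
  ext ⟨x, i⟩ ⟨y, j⟩
  rw [Matrix.mul_apply, Fintype.sum_prod_type, Matrix.of_apply]
  split_ifs with h
  · rw [Finset.sum_eq_single ⟨(y, x), h.symm⟩]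
    · simp [dartTailMatrix, dartHeadMatrix, Matrix.one_apply]
    · intro d _ hd
      refine Finset.sum_eq_zero fun k _ => ?_
      simp only [dartTailMatrix, dartHeadMatrix, Matrix.of_apply]
      split_ifs with h1 h2 <;> simp_all [Dart.ext_iff, Prod.ext_iff]
    · simp
  · refine Finset.sum_eq_zero fun d _ => Finset.sum_eq_zero fun k _ => ?_
    have : ¬ (d.snd = x ∧ d.fst = y) := fun ⟨h1, h2⟩ => h (by rw [← h1, ← h2]; exact d.adj.symm)
    simp only [dartTailMatrix, dartHeadMatrix, Matrix.of_apply]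
    split_ifs <;> simp_all

theorem dartReversalMatrix_mul_self {U : G.Dart → Matrix ι ι R}
    (hU : ∀ d, U d.symm * U d = 1) : G.dartReversalMatrix U * G.dartReversalMatrix U = 1 := by
  ext ⟨d, i⟩ ⟨e, j⟩
  simp only [Matrix.mul_apply, Fintype.sum_prod_type, dartReversalMatrix, Matrix.of_apply,
    ite_zero_mul]
  by_cases h : e = d
  · subst h
    simp [← Matrix.mul_apply, hU, Matrix.one_apply]
  · simp [h, Ne.symm h]

theorem transpose_dartTailMatrix_mul_self :
    (G.dartTailMatrix R ι)ᵀ * G.dartTailMatrix R ι =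
      Matrix.diagonal fun x => (G.degree x.1 : R) := by
  ext ⟨x, i⟩ ⟨y, j⟩
  rw [Matrix.mul_apply, Fintype.sum_prod_type]
  simp only [dartTailMatrix, Matrix.transpose_apply, Matrix.of_apply, mul_ite, mul_zero,
    Finset.sum_ite_irrel, Finset.sum_const_zero, Matrix.one_apply, mul_one, Finset.sum_ite_eq',
    Finset.mem_univ, if_true]
  rw [Matrix.diagonal_apply]
  by_cases hxy : x = y
  · subst hxy
    by_cases hij : i = j
    · simp +contextual [hij, Finset.sum_boole, dart_fst_fiber_card_eq_degree]
    · simp [hij, Ne.symm hij]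
  · simp +contextual [hxy, Ne.symm hxy]

theorem det_one_add_smul_dartReversalMatrix_of_orientation {o : G.Dart → Prop} [DecidablePred o]
    (ho : ∀ d, o d.symm ↔ ¬ o d)
    {U : G.Dart → Matrix ι ι R} (hU : ∀ d, U d.symm * U d = 1) (u : R) :
    det (1 + u • G.dartReversalMatrix U) = (1 - u ^ 2) ^ (Fintype.card ι * G.edgeFinset.card) := by
  let e : G.Dart × ι ≃ (ι × {d // o d}) ⊕ (ι × {d // o d}) :=
    (Equiv.prodComm _ _).trans <| (Equiv.prodCongr (Equiv.refl ι)
      (dartEquivSumOfOrientation ho)).trans (Equiv.prodSumDistrib _ _ _)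
  have hne_symm : ∀ d d' : {d // o d}, d'.1 ≠ d.1.symm := fun d d' h => (ho d).mp (h ▸ d'.2) d.2
  have hsymm_ne : ∀ d d' : {d // o d}, d'.1.symm ≠ d.1 := fun d d' h => hne_symm d' d h.symm
  have hblocks : reindex e e (1 + u • G.dartReversalMatrix U) = fromBlocks 1
      (u • blockDiagonal fun d => U d.1.symm) (u • blockDiagonal fun d => U d.1) 1 := by
    ext (⟨i, d⟩ | ⟨i, d⟩) (⟨j, d'⟩ | ⟨j, d'⟩) <;>
      by_cases hdd : d = d' <;>
      simp [e, dartReversalMatrix, blockDiagonal_apply, Matrix.one_apply, hne_symm, hsymm_ne,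
        Dart.symm_involutive.injective.eq_iff, Subtype.coe_inj, hdd, @eq_comm _ d' d]
  have hU' : ∀ d, U d * U d.symm = 1 := fun d => by simpa using hU d.symm
  have hschur : 1 - (u • blockDiagonal fun d : {d // o d} => U d.1) *
      (u • blockDiagonal fun d => U d.1.symm) =
        (1 - u ^ 2) • (1 : Matrix (ι × {d // o d}) _ R) := by
    rw [smul_mul_smul_comm, ← blockDiagonal_mul]
    simp only [hU', ← Pi.one_def, blockDiagonal_one, sub_smul, one_smul, sq]
  rw [← det_reindex_self e, hblocks, det_fromBlocks_one₁₁, hschur, det_smul, det_one, mul_one,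
    Fintype.card_prod, card_subtype_orientation ho]

theorem det_one_add_smul_dartReversalMatrix {U : G.Dart → Matrix ι ι R}
    (hU : ∀ d, U d.symm * U d = 1) (u : R) :
    det (1 + u • G.dartReversalMatrix U) = (1 - u ^ 2) ^ (Fintype.card ι * G.edgeFinset.card) := by
  classical
  obtain ⟨o, ho⟩ := G.exists_orientation
  exact G.det_one_add_smul_dartReversalMatrix_of_orientation ho hU u

end SimpleGraph

theorem tblock_eq (G : SimpleGraph V) [Fintype V] [DecidableEq V] (n : ℕ)
    (U : G.Dart → Matrix (Fin n) (Fin n) ℂ) :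
    Tblock G n U = G.dartTailMatrix ℂ (Fin n) * G.dartHeadMatrix U - G.dartReversalMatrix U := by
  rw [SimpleGraph.dartTailMatrix_mul_dartHeadMatrix]
  ext ⟨d, i⟩ ⟨e, j⟩
  simp only [Tblock, FollowsNB, SimpleGraph.dartReversalMatrix, Matrix.sub_apply, Matrix.of_apply]
  by_cases he : e = d.symm
  · simp [he]
  · have hd : d ≠ e.symm := fun h => he (by rw [h, SimpleGraph.Dart.symm_symm])
    simp [he, hd]

theorem deltaBlock_eq (G : SimpleGraph V) [Fintype V] [DecidableEq V] [DecidableRel G.Adj] (n : ℕ)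
    (U : G.Dart → Matrix (Fin n) (Fin n) ℂ) (u : ℂ) :
    DeltaBlock G n U u = (1 - u ^ 2) • 1 +
      u ^ 2 • ((G.dartTailMatrix ℂ (Fin n))ᵀ * G.dartTailMatrix ℂ (Fin n)) -
      u • (G.dartHeadMatrix U * G.dartTailMatrix ℂ (Fin n)) := by
  rw [SimpleGraph.transpose_dartTailMatrix_mul_self, SimpleGraph.dartHeadMatrix_mul_dartTailMatrix]
  ext ⟨x, i⟩ ⟨y, j⟩
  simp only [DeltaBlock, Matrix.sub_apply, Matrix.add_apply, Matrix.smul_apply, Matrix.of_apply,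
    Matrix.one_apply, Matrix.diagonal_apply]
  by_cases hxy : x = y
  · subst hxy
    by_cases hij : i = j
    · simp [hij]
      ring
    · simp [hij]
  · simp only [hxy, Prod.mk.injEq, false_and, if_false, smul_eq_mul]
    split_ifs <;> ring

theorem bass_determinant_lemma_general (G : SimpleGraph V) [Fintype V] [DecidableEq V]
    [DecidableRel G.Adj] (n : ℕ)
    (U : G.Dart → Matrix (Fin n) (Fin n) ℂ)
    (hUinv : ∀ d, IsUnit (U d)) (hUrev : ∀ d, U d.symm = (U d)⁻¹) (u : ℂ) :
    (1 - u ^ 2) ^ (n * Fintype.card V) * Matrix.det (1 - u • Tblock G n U) =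
      (1 - u ^ 2) ^ (n * G.edgeFinset.card) * Matrix.det (DeltaBlock G n U u) := by
  have hU : ∀ d, U d.symm * U d = 1 := fun d => by
    rw [hUrev, Matrix.nonsing_inv_mul _ ((U d).isUnit_iff_isUnit_det.mp (hUinv d))]
  have hJ : det (1 + u • G.dartReversalMatrix U) = (1 - u ^ 2) ^ (n * G.edgeFinset.card) := by
    simpa using G.det_one_add_smul_dartReversalMatrix hU u
  have hcard : n * Fintype.card V = Fintype.card (V × Fin n) := by
    rw [Fintype.card_prod, Fintype.card_fin, mul_comm]
  rw [tblock_eq, deltaBlock_eq, ← SimpleGraph.transpose_dartTailMatrix_mul_dartReversalMatrix,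
    hcard, ← hJ]
  exact Matrix.bass_det_identity _ _ _ (G.dartReversalMatrix_mul_self hU) u

/-- **Bass determinant lemma** for a unitary-type potential `U` on oriented edges:
`(1 − u²)^{n|V|} · det(I − u·T) = (1 − u²)^{n|E|} · det(Δ(u))`. -/
theorem bass_determinant_lemma (G : SimpleGraph V) [Fintype V] [DecidableEq V]
    [DecidableRel G.Adj] (n : ℕ) (hn : 1 ≤ n)
    (U : G.Dart → Matrix (Fin n) (Fin n) ℂ)
    (hUinv : ∀ d, IsUnit (U d)) (hUrev : ∀ d, U d.symm = (U d)⁻¹) (u : ℂ) :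
    (1 - u ^ 2) ^ (n * Fintype.card V) * Matrix.det (1 - u • Tblock G n U) =
      (1 - u ^ 2) ^ (n * G.edgeFinset.card) * Matrix.det (DeltaBlock G n U u) :=
  bass_determinant_lemma_general G n U hUinv hUrev u
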